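/- arXiv:2503.04536 — 2 statements merged into one kernel-verified Lean document; each statement's English description precedes it below -/
import Mathlib

section
/- Let Ω₀ and Ω₁ be compact subsets of ℝⁿ, c : Ω₀ × Ω₁ → ℝ be C¹, and φ : Ω₀ → ℝ be c-concave. If x₁ is an interior point of Ω₀ at which φ is differentiable and m ∈ ∂_cφ(x₁), then the function z ↦ φ(z) − c(z,m) attains its maximum over Ω₀ at z = x₁, and consequently ∇φ(x₁) = ∇ₓc(x₁, m). In particular, if in addition y ↦ ∇ₓc(x₁, y) is injective on Ω₁, then ∂_cφ(x₁) is a singleton. -/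
/-! The `c`-concavity bound `φ ≤ c(·, m₀) − b` together with compactness of `Ω₀` keeps the
infimum defining `φ^c` finite, so `m ∈ ∂_cφ(x₁)` says exactly that `x₁` maximizes
`φ − c(·, m)` on `Ω₀`. At an interior point this maximum is a local one, so the derivatives of
`φ` and `c(·, m)` agree at `x₁`; injectivity of `y ↦ ∇ₓc(x₁, y)` then pins down `m`. -/

/-- The `c`-transform relative to the domain `Ω₀`:
`u^c(m) = inf_{x ∈ Ω₀} (c(x,m) − u(x))`. -/
noncomputable def cTransformOn {E : Type*} (Ω₀ : Set E) (c : E → E → ℝ) (u : E → ℝ)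
    (m : E) : ℝ :=
  ⨅ x : Ω₀, (c x m - u x)

/-- `φ` is `c`-concave on `Ω₀` (relative to the target `Ω₁`). -/
def CConcaveOn {E : Type*} (Ω₀ Ω₁ : Set E) (c : E → E → ℝ) (φ : E → ℝ) : Prop :=
  ∀ x₀ ∈ Ω₀, ∃ m₀ ∈ Ω₁, ∃ b : ℝ, (∀ x ∈ Ω₀, φ x ≤ c x m₀ - b) ∧ φ x₀ = c x₀ m₀ - b

/-- The `c`-superdifferential `∂_cφ(x) = { m ∈ Ω₁ : φ(x) + φ^c(m) = c(x,m) }`. -/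
noncomputable def cSuperdiffOn {E : Type*} (Ω₀ Ω₁ : Set E) (c : E → E → ℝ) (φ : E → ℝ)
    (x : E) : Set E :=
  {m ∈ Ω₁ | φ x + cTransformOn Ω₀ c φ m = c x m}

open Set Filter Topology

section CTransform

variable {E : Type*} {Ω₀ Ω₁ : Set E} {c : E → E → ℝ} {φ : E → ℝ}

theorem CConcaveOn.bddBelow_range_sub [TopologicalSpace E] (hφ : CConcaveOn Ω₀ Ω₁ c φ)
    (hΩ₀ : IsCompact Ω₀) (hc : ∀ y, ContinuousOn (c · y) Ω₀) (m : E) :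
    BddBelow (range fun x : Ω₀ => c x m - φ x) := by
  rcases Ω₀.eq_empty_or_nonempty with rfl | ⟨x₀, hx₀⟩
  · simp [range_eq_empty]
  obtain ⟨m₀, -, b, hb, -⟩ := hφ x₀ hx₀
  obtain ⟨K, hK⟩ :=
    (hΩ₀.image_of_continuousOn (((hc m).sub (hc m₀)).add continuousOn_const)).bddBelow
  refine ⟨K, ?_⟩
  rintro _ ⟨⟨x, hx⟩, rfl⟩
  have hKx : K ≤ c x m - c x m₀ + b := hK ⟨x, hx, rfl⟩
  linarith [hb x hx]

theorem cTransformOn_le {m : E} (hbdd : BddBelow (range fun x : Ω₀ => c x m - φ x)) {z : E}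
    (hz : z ∈ Ω₀) : cTransformOn Ω₀ c φ m ≤ c z m - φ z :=
  ciInf_le hbdd ⟨z, hz⟩

theorem isMaxOn_sub_of_mem_cSuperdiffOn {x m : E}
    (hbdd : BddBelow (range fun z : Ω₀ => c z m - φ z)) (hm : m ∈ cSuperdiffOn Ω₀ Ω₁ c φ x) :
    IsMaxOn (fun z => φ z - c z m) Ω₀ x := by
  intro z hz
  have hle := cTransformOn_le hbdd hz
  have heq : φ x + cTransformOn Ω₀ c φ m = c x m := hm.2
  show φ z - c z m ≤ φ x - c x m
  linarith

end CTransform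

theorem fderiv_eq_of_isMaxOn_sub {E : Type*} [NormedAddCommGroup E] [NormedSpace ℝ E]
    {f g : E → ℝ} {s : Set E} {x : E} (hf : DifferentiableAt ℝ f x)
    (hg : DifferentiableAt ℝ g x) (hs : s ∈ 𝓝 x) (hmax : IsMaxOn (fun z => f z - g z) s x) :
    fderiv ℝ f x = fderiv ℝ g x := by
  have hzero : fderiv ℝ (fun z => f z - g z) x = 0 := (hmax.isLocalMax hs).fderiv_eq_zero
  rw [fderiv_fun_sub hf hg] at hzero
  exact sub_eq_zero.mp hzero

theorem cSuperdiff_singleton_of_differentiable_general {n : ℕ}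
    (Ω₀ Ω₁ : Set (EuclideanSpace ℝ (Fin n)))
    (hΩ₀ : IsCompact Ω₀)
    (c : EuclideanSpace ℝ (Fin n) → EuclideanSpace ℝ (Fin n) → ℝ)
    (hc : ContDiff ℝ 1 (Function.uncurry c))
    (φ : EuclideanSpace ℝ (Fin n) → ℝ) (hφ : CConcaveOn Ω₀ Ω₁ c φ)
    (x₁ : EuclideanSpace ℝ (Fin n)) (hx₁ : x₁ ∈ interior Ω₀)
    (hdiff : DifferentiableAt ℝ φ x₁)
    (m : EuclideanSpace ℝ (Fin n)) (hm : m ∈ cSuperdiffOn Ω₀ Ω₁ c φ x₁) :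
    (∀ z ∈ Ω₀, φ z - c z m ≤ φ x₁ - c x₁ m) ∧
    gradient φ x₁ = gradient (fun x' => c x' m) x₁ ∧
    (Set.InjOn (fun y => gradient (fun x' => c x' y) x₁) Ω₁ →
      ∃ m' : EuclideanSpace ℝ (Fin n), cSuperdiffOn Ω₀ Ω₁ c φ x₁ = {m'}) := by
  have hc_slice (y) : ContDiff ℝ 1 (c · y) := hc.comp (contDiff_id.prodMk contDiff_const)
  have hbdd := hφ.bddBelow_range_sub hΩ₀ fun y => (hc_slice y).continuous.continuousOn
  have hmax (y) (hy : y ∈ cSuperdiffOn Ω₀ Ω₁ c φ x₁) : IsMaxOn (fun z => φ z - c z y) Ω₀ x₁ :=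
    isMaxOn_sub_of_mem_cSuperdiffOn (hbdd y) hy
  have hgrad (y) (hy : y ∈ cSuperdiffOn Ω₀ Ω₁ c φ x₁) :
      gradient φ x₁ = gradient (c · y) x₁ :=
    congrArg _ <| fderiv_eq_of_isMaxOn_sub hdiff
      ((hc_slice y).differentiable one_ne_zero x₁) (mem_interior_iff_mem_nhds.mp hx₁) (hmax y hy)
  refine ⟨isMaxOn_iff.mp (hmax m hm), hgrad m hm, fun hinj => ⟨m, ?_⟩⟩
  exact eq_singleton_iff_unique_mem.mpr
    ⟨hm, fun y hy => hinj hy.1 hm.1 ((hgrad y hy).symm.trans (hgrad m hm))⟩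

/-- If `φ` is `c`-concave, `x₁` is an interior point of `Ω₀` at which `φ` is
differentiable and `m ∈ ∂_cφ(x₁)`, then `z ↦ φ(z) − c(z,m)` attains its maximum over `Ω₀`
at `z = x₁`, hence `∇φ(x₁) = ∇ₓc(x₁,m)`; if moreover `y ↦ ∇ₓc(x₁,y)` is injective on `Ω₁`,
then `∂_cφ(x₁)` is a singleton. -/
theorem cSuperdiff_singleton_of_differentiable {n : ℕ}
    (Ω₀ Ω₁ : Set (EuclideanSpace ℝ (Fin n)))
    (hΩ₀ : IsCompact Ω₀) (hΩ₁ : IsCompact Ω₁)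
    (c : EuclideanSpace ℝ (Fin n) → EuclideanSpace ℝ (Fin n) → ℝ)
    (hc : ContDiff ℝ 1 (Function.uncurry c))
    (φ : EuclideanSpace ℝ (Fin n) → ℝ) (hφ : CConcaveOn Ω₀ Ω₁ c φ)
    (x₁ : EuclideanSpace ℝ (Fin n)) (hx₁ : x₁ ∈ interior Ω₀)
    (hdiff : DifferentiableAt ℝ φ x₁)
    (m : EuclideanSpace ℝ (Fin n)) (hm : m ∈ cSuperdiffOn Ω₀ Ω₁ c φ x₁) :
    (∀ z ∈ Ω₀, φ z - c z m ≤ φ x₁ - c x₁ m) ∧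
    gradient φ x₁ = gradient (fun x' => c x' m) x₁ ∧
    (Set.InjOn (fun y => gradient (fun x' => c x' y) x₁) Ω₁ →
      ∃ m' : EuclideanSpace ℝ (Fin n), cSuperdiffOn Ω₀ Ω₁ c φ x₁ = {m'}) :=
  cSuperdiff_singleton_of_differentiable_general Ω₀ Ω₁ hΩ₀ c hc φ hφ x₁ hx₁ hdiff m hm
end

section
/- Let f be a real-valued C² function defined on an open subset of ℝⁿ, β ∈ ℝ, and c(x,y) = √((β − f(x))² + |x − y|²) at a point (x,y) with f(x) ≠ β. Then the determinant of the n×n matrix of mixed second partial derivatives (∂²c/∂xᵢ∂y_j)(x,y) equals (−1/c(x,y))ⁿ · ((β − f(x))/c(x,y)²) · (β − f(x) + (x − y)·∇f(x)), where · denotes the Euclidean inner product. -/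
open scoped RealInnerProductSpace Topology

/-!
Differentiating in `y` gives `∂c/∂y = -(x - y)/c`, and differentiating that in `x` shows that the
mixed Hessian is `-(1/c) (I + a (x - y)ᵀ)` with `a = ((β - f x) ∇f(x) - (x - y))/c²`. By the matrix
determinant lemma its determinant is `(-1/c)ⁿ (1 + ⟪a, x - y⟫)`, and
`c² = (β - f x)² + |x - y|²` turns `1 + ⟪a, x - y⟫` into `(β - f x)/c² · (β - f x + ⟪x - y, ∇f(x)⟫)`.
-/

section Cost

variable {E : Type*} [NormedAddCommGroup E] {f : E → ℝ} {g : E} {β : ℝ} {x y : E}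

/-- The Euclidean distance from the point `(x, f x)` of the graph of `f` to the point `(y, β)`. -/
noncomputable def cost (f : E → ℝ) (β : ℝ) (x y : E) : ℝ :=
  √((β - f x) ^ 2 + ‖x - y‖ ^ 2)

theorem sq_add_norm_sq_pos (y : E) (h : f x ≠ β) : 0 < (β - f x) ^ 2 + ‖x - y‖ ^ 2 := by
  have : β - f x ≠ 0 := sub_ne_zero.2 h.symm
  positivity

theorem cost_pos (y : E) (h : f x ≠ β) : 0 < cost f β x y :=
  Real.sqrt_pos.2 (sq_add_norm_sq_pos y h)

theorem sq_cost (y : E) : cost f β x y ^ 2 = (β - f x) ^ 2 + ‖x - y‖ ^ 2 :=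
  Real.sq_sqrt (by positivity)

variable [InnerProductSpace ℝ E]

theorem hasFDerivAt_cost_right (h : f x ≠ β) :
    HasFDerivAt (cost f β x) (-(cost f β x y)⁻¹ • innerSL ℝ (x - y)) y := by
  have hsub : HasFDerivAt (fun y' => x - y') (-ContinuousLinearMap.id ℝ E) y := by
    simpa using (hasFDerivAt_id y).const_sub x
  have hQ := (hsub.norm_sq.const_add ((β - f x) ^ 2)).sqrt (sq_add_norm_sq_pos y h).ne'
  refine hQ.congr_fderiv (ContinuousLinearMap.ext fun v => ?_)
  simp only [one_div, mul_inv_rev, map_sub, ContinuousLinearMap.comp_neg,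
    ContinuousLinearMap.comp_id, neg_sub, smul_apply, sub_apply, coe_innerSL_apply,
    nsmul_eq_mul, Nat.cast_ofNat, smul_eq_mul, cost, neg_smul, neg_apply]
  ring

theorem fderiv_cost_right_eventuallyEq (hf : ContinuousAt f x) (h : f x ≠ β) (v : E) :
    (fun x' => fderiv ℝ (cost f β x') y v) =ᶠ[𝓝 x] fun x' => -(cost f β x' y)⁻¹ * ⟪x' - y, v⟫ := by
  filter_upwards [hf.eventually_ne h] with x' hx'
  rw [(hasFDerivAt_cost_right hx').fderiv]
  rfl

theorem one_add_inner_smul_sub (h : f x ≠ β) :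
    1 + ⟪(cost f β x y ^ 2)⁻¹ • ((β - f x) • g - (x - y)), x - y⟫ =
      (β - f x) / cost f β x y ^ 2 * (β - f x + ⟪x - y, g⟫) := by
  have hc := (cost_pos y h).ne'
  rw [real_inner_smul_left, inner_sub_left, real_inner_smul_left, real_inner_self_eq_norm_sq,
    real_inner_comm]
  field_simp
  rw [sq_cost]
  ring

variable [CompleteSpace E]

theorem hasFDerivAt_cost_left (hf : HasGradientAt f g x) (h : f x ≠ β) :
    HasFDerivAt (fun x' => cost f β x' y)
      ((cost f β x y)⁻¹ • innerSL ℝ (x - y - (β - f x) • g)) x := by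
  have hQ := ((hf.hasFDerivAt.const_sub β).pow 2).add
    ((hasFDerivAt_id x).sub_const y).norm_sq |>.sqrt (sq_add_norm_sq_pos y h).ne'
  refine hQ.congr_fderiv (ContinuousLinearMap.ext fun v => ?_)
  simp only [id_eq, Pi.add_apply, one_div, mul_inv_rev, Nat.add_one_sub_one, pow_one,
    nsmul_eq_mul, Nat.cast_ofNat, smul_neg, map_sub, ContinuousLinearMap.comp_id, smul_add,
    add_apply, neg_apply, smul_apply, InnerProductSpace.toDual_apply_apply, smul_eq_mul,
    sub_apply, coe_innerSL_apply, cost, map_smul]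
  ring

theorem fderiv_fderiv_cost (hf : HasGradientAt f g x) (h : f x ≠ β) (v w : E) :
    fderiv ℝ (fun x' => fderiv ℝ (cost f β x') y v) x w =
      -(cost f β x y)⁻¹ *
        (⟪w, v⟫ + ⟪(cost f β x y ^ 2)⁻¹ • ((β - f x) • g - (x - y)), w⟫ * ⟪x - y, v⟫) := by
  rw [(fderiv_cost_right_eventuallyEq hf.hasFDerivAt.continuousAt h v).fderiv_eq]
  have hc := (cost_pos y h).ne'
  have hinv := ((hasDerivAt_inv hc).comp_hasFDerivAt x (hasFDerivAt_cost_left hf h)).neg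
  have hlin := ((hasFDerivAt_id x).sub_const y).inner ℝ (hasFDerivAt_const v x)
  have hprod : HasFDerivAt (fun x' => -(cost f β x' y)⁻¹ * ⟪x' - y, v⟫) _ x := hinv.mul hlin
  rw [hprod.fderiv]
  simp only [Pi.neg_apply, Function.comp_apply, id_eq, neg_smul, inner_sub_left, map_sub,
    map_smul, neg_neg, add_apply, neg_apply, smul_apply, ContinuousLinearMap.comp_apply,
    ContinuousLinearMap.prod_apply, ContinuousLinearMap.id_apply, zero_apply, fderivInnerCLM_apply,
    inner_zero_right, zero_add, smul_eq_mul, sub_apply, coe_innerSL_apply, real_inner_smul_left,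
    neg_mul]
  field_simp
  ring

end Cost

theorem det_of_smul_inner_single_add {ι : Type*} [Fintype ι] [DecidableEq ι] (s : ℝ)
    (a b : EuclideanSpace ℝ ι) :
    (Matrix.of fun i j => s * (⟪EuclideanSpace.single i (1 : ℝ), EuclideanSpace.single j 1⟫ +
        ⟪a, EuclideanSpace.single i 1⟫ * ⟪b, EuclideanSpace.single j 1⟫)).det =
      s ^ Fintype.card ι * (1 + ⟪a, b⟫) := by
  have hM : (Matrix.of fun i j =>
        s * (⟪EuclideanSpace.single i (1 : ℝ), EuclideanSpace.single j 1⟫ +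
          ⟪a, EuclideanSpace.single i 1⟫ * ⟪b, EuclideanSpace.single j 1⟫)) =
      s • (1 + Matrix.replicateCol Unit a.ofLp * Matrix.replicateRow Unit b.ofLp) := by
    ext i j
    simp [EuclideanSpace.inner_single_right, Matrix.one_apply, Matrix.mul_apply, eq_comm]
  rw [hM, Matrix.det_smul, Matrix.det_one_add_replicateCol_mul_replicateRow]
  rfl

/-- For the cost `c(x,y) = √((β − f(x))² + |x − y|²)` with `f(x) ≠ β`,
the determinant of the matrix of mixed second partials equals
`(−1/c)ⁿ ((β − f(x))/c²)(β − f(x) + (x − y)·∇f(x))`. -/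
theorem det_mixed_partials_constant_g {n : ℕ}
    (f : EuclideanSpace ℝ (Fin n) → ℝ)
    (U : Set (EuclideanSpace ℝ (Fin n))) (hU : IsOpen U)
    (hf : ContDiffOn ℝ 2 f U)
    (β : ℝ)
    (x y : EuclideanSpace ℝ (Fin n)) (hx : x ∈ U)
    (hfβ : f x ≠ β) :
    Matrix.det (Matrix.of fun i j : Fin n =>
      fderiv ℝ (fun x' => fderiv ℝ
          (fun y' => Real.sqrt ((β - f x') ^ 2 + ‖x' - y'‖ ^ 2)) y
          (EuclideanSpace.single j 1)) x (EuclideanSpace.single i 1))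
    = (-(Real.sqrt ((β - f x) ^ 2 + ‖x - y‖ ^ 2))⁻¹) ^ n *
      ((β - f x) / (Real.sqrt ((β - f x) ^ 2 + ‖x - y‖ ^ 2)) ^ 2) *
      (β - f x + ⟪x - y, gradient f x⟫) := by
  have hg : HasGradientAt f (gradient f x) x :=
    ((hf.contDiffAt (hU.mem_nhds hx)).differentiableAt (by norm_num)).hasGradientAt
  change Matrix.det (Matrix.of fun i j => fderiv ℝ (fun x' => fderiv ℝ (cost f β x') y _) x _) =
    (-(cost f β x y)⁻¹) ^ n * ((β - f x) / cost f β x y ^ 2) * _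
  simp only [fderiv_fderiv_cost hg hfβ]
  rw [det_of_smul_inner_single_add, Fintype.card_fin, mul_assoc, one_add_inner_smul_sub hfβ]
end
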